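/- Let ℛ' = (0,1/√3)×(0,1) and K₂'x = −x + (1/√3, 1), so that 𝒯 together with K₁' = id and K₂' tiles ℛ'. For λ ∈ (0,1) set x_λ = λ(1/√3,0) + (1−λ)(0,1); then x_λ ∈ ∂𝒯 and K₂'(x_λ) = x_{1−λ}. Moreover, for every pair (δ₁,δ₂) ∈ {−1,1}², there exist a continuous function φ : ℝ² → ℝ vanishing on ∂ℛ' and a point x ∈ ∂𝒯 such that δ₁φ(x) + δ₂φ(K₂'x) ≠ 0; hence this tiling of ℛ' by 𝒯 is not admissible. -/

import Mathlib

open Real Set MeasureTheory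

noncomputable section

/-- The open triangle with vertices `(0,0)`, `(1/√3, 0)`, `(0,1)`. -/
def Tri : Set (ℝ × ℝ) := {p | 0 < p.1 ∧ 0 < p.2 ∧ Real.sqrt 3 * p.1 + p.2 < 1}

/-- The open rectangle `(0,√3) × (0,1)`. -/
def Rect : Set (ℝ × ℝ) := Set.Ioo (0 : ℝ) (Real.sqrt 3) ×ˢ Set.Ioo (0 : ℝ) 1

/-- The rotation matrix `((cos π/3, sin π/3), (−sin π/3, cos π/3))` acting on `ℝ²`. -/
def rot0 (p : ℝ × ℝ) : ℝ × ℝ :=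
  (Real.cos (π / 3) * p.1 + Real.sin (π / 3) * p.2,
   -Real.sin (π / 3) * p.1 + Real.cos (π / 3) * p.2)

/-- The Pauli matrix `σ_z` acting on `ℝ²`. -/
def sz (p : ℝ × ℝ) : ℝ × ℝ := (p.1, -p.2)

def v1 : ℝ × ℝ := (1 / Real.sqrt 3, 0)

def v2 : ℝ × ℝ := ((0 : ℝ), 1)

/-- The six rigid transformations `K₁, …, K₆` (indexed by `0, …, 5`). -/
def K : Fin 6 → (ℝ × ℝ) → (ℝ × ℝ) :=
  ![fun x => x,
    fun x => -rot0 (sz (x - v2)) + v2,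
    fun x => rot0 (x - v2) + v2,
    fun x => -rot0 (x - v2) + (3 : ℝ) • v1,
    fun x => -rot0 (x - v2) + (3 : ℝ) • v1 + v2,
    fun x => -x + (3 : ℝ) • v1 + v2]

/-- The coefficients `δ = (1,−1,1,1,−1,1)`. -/
def del : Fin 6 → ℝ := ![1, -1, 1, 1, -1, 1]

/-- The eigenfunctions `ē_k` on the rectangle. -/
def ebar (k : ℕ × ℕ) (p : ℝ × ℝ) : ℝ :=
  Real.sin (π * k.1 * p.1 / Real.sqrt 3) * Real.sin (π * k.2 * p.2)

/-- The eigenfunctions `e_k(x) = Σ_h δ_h ē_k(K_h x)`. -/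
def efun (k : ℕ × ℕ) (p : ℝ × ℝ) : ℝ :=
  ∑ h : Fin 6, del h * ebar k (K h p)

end

/-- The rectangle `ℛ' = (0,1/√3) × (0,1)`. -/
noncomputable def Rect' : Set (ℝ × ℝ) := Set.Ioo (0 : ℝ) (1 / Real.sqrt 3) ×ˢ Set.Ioo (0 : ℝ) 1

/-- The map `K₂' x = −x + (1/√3, 1)`. -/
noncomputable def K2' (x : ℝ × ℝ) : ℝ × ℝ := -x + (1 / Real.sqrt 3, 1)

/-!
In the coordinates `(√3 x, y)` the triangle `𝒯` becomes the simplex `u, y ≥ 0, u + y ≤ 1`, the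
rectangle `ℛ'` the unit square, and `K₂'` the point reflection through its centre, which swaps
the two halves of the square cut by the diagonal `u + y = 1`; this gives the tiling.

For non-admissibility take `φ = ψ · y`, where `ψ(x, y) = x (1/√3 - x) y (1 - y)` vanishes on
`∂ℛ'` and is invariant under `K₂'`. Then `δ₁ φ(p) + δ₂ φ(K₂' p) = ψ(p) (δ₁ p₂ + δ₂ (1 - p₂))`,
which is nonzero at the point `x_{1/4} = (1/(4√3), 3/4)` of `∂𝒯`, since `ψ > 0` there and
`3 δ₁ + δ₂ ≠ 0`.
-/

theorem closure_eq_of_openSegment_subset {E : Type*} [AddCommGroup E] [Module ℝ E]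
    [TopologicalSpace E] [ContinuousAdd E] [ContinuousSMul ℝ E] {s t : Set E}
    (hst : s ⊆ t) (ht : IsClosed t) (c : E) (hc : ∀ p ∈ t, openSegment ℝ c p ⊆ s) :
    closure s = t :=
  (closure_minimal hst ht).antisymm fun p hp =>
    closure_mono (hc p hp) (segment_subset_closure_openSegment (right_mem_segment ℝ c p))

lemma sqrt_three_pos : 0 < √3 := by positivity

lemma sqrt_three_mul_div (a : ℝ) : √3 * (a / √3) = a :=
  mul_div_cancel₀ a sqrt_three_pos.ne'

lemma isOpen_Tri : IsOpen Tri :=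
  (isOpen_lt continuous_const continuous_fst).inter
    ((isOpen_lt continuous_const continuous_snd).inter
      (isOpen_lt (f := fun p : ℝ × ℝ => √3 * p.1 + p.2) (by fun_prop) continuous_const))

lemma closure_Tri : closure Tri = {p | 0 ≤ p.1 ∧ 0 ≤ p.2 ∧ √3 * p.1 + p.2 ≤ 1} := by
  refine closure_eq_of_openSegment_subset (fun p ⟨h₁, h₂, h₃⟩ => ⟨h₁.le, h₂.le, h₃.le⟩)
    ((isClosed_le continuous_const continuous_fst).inter
      ((isClosed_le continuous_const continuous_snd).inter
        (isClosed_le (f := fun p : ℝ × ℝ => √3 * p.1 + p.2) (by fun_prop)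
          continuous_const)))
    ((1 / 4) / √3, 1 / 4) ?_
  rintro p ⟨hp₁, hp₂, hp₃⟩ _ ⟨a, b, ha, hb, hab, rfl⟩
  have hc : √3 * ((1 / 4) / √3) = 1 / 4 := sqrt_three_mul_div _
  have hc₁ : 0 < (1 / 4) / √3 := by positivity
  refine ⟨?_, ?_, ?_⟩ <;> simp only [Prod.fst_add, Prod.snd_add, Prod.smul_fst, Prod.smul_snd,
    smul_eq_mul]
  · nlinarith [mul_pos ha hc₁, mul_nonneg hb.le hp₁]
  · nlinarith [mul_nonneg hb.le hp₂]
  · nlinarith [mul_le_mul_of_nonneg_left hp₃ hb.le]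

lemma mk_mem_frontier_Tri {t : ℝ} (ht : t ∈ Icc (0 : ℝ) 1) : (t / √3, 1 - t) ∈ frontier Tri := by
  rw [isOpen_Tri.frontier_eq, closure_Tri]
  have hsum : √3 * (t / √3) + (1 - t) = 1 := by rw [sqrt_three_mul_div]; ring
  exact ⟨⟨by have := ht.1; positivity, by linarith [ht.2], hsum.le⟩, fun h => h.2.2.ne hsum⟩

lemma K2'_apply (p : ℝ × ℝ) : K2' p = (1 / √3 - p.1, 1 - p.2) := by
  ext <;> simp only [K2', Prod.fst_add, Prod.snd_add, Prod.fst_neg, Prod.snd_neg] <;> ring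

lemma K2'_involutive : Function.Involutive K2' := fun p => by
  simp only [K2'_apply, sub_sub_cancel]

lemma closure_Rect' : closure Rect' = Icc 0 (1 / √3) ×ˢ Icc 0 1 := by
  rw [Rect', closure_prod_eq, closure_Ioo (by positivity), closure_Ioo one_ne_zero.symm]

lemma closure_Rect'_eq_union : closure Rect' = closure Tri ∪ K2' '' closure Tri := by
  ext ⟨x, y⟩
  obtain ⟨u, rfl⟩ : ∃ u, x = u / √3 := ⟨√3 * x, by field_simp⟩
  have hs := sqrt_three_pos
  have hnonneg (a : ℝ) : 0 ≤ a / √3 ↔ 0 ≤ a := by rw [le_div_iff₀ hs, zero_mul]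
  rw [K2'_involutive.image_eq_preimage_symm]
  simp only [closure_Rect', closure_Tri, K2'_apply, mem_union, mem_preimage, mem_prod, mem_Icc,
    mem_ofPred_eq, div_sub_div_same, sqrt_three_mul_div, hnonneg, div_le_div_iff_of_pos_right hs]
  constructor
  · rintro ⟨⟨hu₀, hu₁⟩, hy₀, hy₁⟩
    rcases le_total (u + y) 1 with h | h
    · exact Or.inl ⟨hu₀, hy₀, h⟩
    · exact Or.inr ⟨by linarith, by linarith, by linarith⟩
  · rintro (⟨hu, hy, h⟩ | ⟨hu, hy, h⟩) <;> refine ⟨⟨?_, ?_⟩, ?_, ?_⟩ <;> linarith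

lemma disjoint_Tri_image_K2' : Disjoint Tri (K2' '' Tri) := by
  rw [K2'_involutive.image_eq_preimage_symm, disjoint_left]
  rintro ⟨x, y⟩ ⟨-, -, h⟩ ⟨-, -, h'⟩
  simp only [K2'_apply, mul_sub, sqrt_three_mul_div] at h h'
  linarith

def rectBump (a b c d : ℝ) (p : ℝ × ℝ) : ℝ := (p.1 - a) * (b - p.1) * ((p.2 - c) * (d - p.2))

lemma continuous_rectBump (a b c d : ℝ) : Continuous (rectBump a b c d) := by
  unfold rectBump; fun_prop

lemma rectBump_eq_zero_of_mem_frontier {a b c d : ℝ} (hab : a < b) (hcd : c < d) {p : ℝ × ℝ}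
    (hp : p ∈ frontier (Ioo a b ×ˢ Ioo c d)) : rectBump a b c d p = 0 := by
  rw [frontier_prod_eq, frontier_Ioo hab, frontier_Ioo hcd] at hp
  rcases hp with ⟨-, h | h⟩ | ⟨h | h, -⟩ <;> simp [rectBump, mem_singleton_iff.mp h]

lemma rectBump_pos {a b c d : ℝ} {p : ℝ × ℝ} (hp : p ∈ Ioo a b ×ˢ Ioo c d) :
    0 < rectBump a b c d p := by
  obtain ⟨⟨h₁, h₂⟩, h₃, h₄⟩ := hp
  exact mul_pos (mul_pos (sub_pos.2 h₁) (sub_pos.2 h₂)) (mul_pos (sub_pos.2 h₃) (sub_pos.2 h₄))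

lemma rectBump_K2' (p : ℝ × ℝ) : rectBump 0 (1 / √3) 0 1 (K2' p) = rectBump 0 (1 / √3) 0 1 p := by
  rw [K2'_apply, rectBump, rectBump]; ring

lemma smul_v1_add_smul_v2 (t : ℝ) : t • v1 + (1 - t) • v2 = (t / √3, 1 - t) := by
  ext <;> simp [v1, v2, div_eq_mul_inv]

lemma K2'_mk_div_sqrt_three (t : ℝ) : K2' (t / √3, 1 - t) = ((1 - t) / √3, 1 - (1 - t)) := by
  rw [K2'_apply, div_sub_div_same]

lemma exists_continuous_folding_ne_zero {d₁ d₂ : ℝ} (hd₁ : d₁ = 1 ∨ d₁ = -1)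
    (hd₂ : d₂ = 1 ∨ d₂ = -1) :
    ∃ φ : ℝ × ℝ → ℝ, Continuous φ ∧ (∀ x ∈ frontier Rect', φ x = 0) ∧
      ∃ x ∈ frontier Tri, d₁ * φ x + d₂ * φ (K2' x) ≠ 0 := by
  have hs := sqrt_three_pos
  refine ⟨fun p => rectBump 0 (1 / √3) 0 1 p * p.2, (continuous_rectBump ..).mul continuous_snd,
    fun x hx => by
      simp only [rectBump_eq_zero_of_mem_frontier (by positivity) one_pos hx, zero_mul],
    _, mk_mem_frontier_Tri (t := 1 / 4) (by norm_num), ?_⟩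
  have hx : ((1 / 4) / √3, 1 - 1 / 4) ∈ Rect' :=
    ⟨⟨by positivity, div_lt_div_of_pos_right (by norm_num) hs⟩, by norm_num, by norm_num⟩
  have hfold (B y : ℝ) : d₁ * (B * y) + d₂ * (B * (1 - y)) = B * (d₁ * y + d₂ * (1 - y)) := by
    ring
  dsimp only
  rw [rectBump_K2', K2'_apply, hfold]
  refine mul_ne_zero (rectBump_pos hx).ne' ?_
  rcases hd₁ with rfl | rfl <;> rcases hd₂ with rfl | rfl <;> norm_num

/-- `𝒯` together with `id` and `K₂'` tiles `ℛ'`; the points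
`x_λ = λ(1/√3,0) + (1−λ)(0,1)` lie on `∂𝒯` and satisfy `K₂'(x_λ) = x_{1−λ}`; and for
every choice of signs `(δ₁,δ₂)` there is a continuous function `φ` vanishing on `∂ℛ'`
whose folding does not vanish on `∂𝒯`: this tiling is not admissible. -/
theorem stmt3 :
    (closure Rect' = closure Tri ∪ K2' '' closure Tri ∧ Disjoint Tri (K2' '' Tri)) ∧
    (∀ lam : ℝ, lam ∈ Set.Ioo (0 : ℝ) 1 →
      (lam • v1 + (1 - lam) • v2) ∈ frontier Tri ∧
      K2' (lam • v1 + (1 - lam) • v2) = (1 - lam) • v1 + (1 - (1 - lam)) • v2) ∧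
    (∀ d₁ d₂ : ℝ, (d₁ = 1 ∨ d₁ = -1) → (d₂ = 1 ∨ d₂ = -1) →
      ∃ φ : ℝ × ℝ → ℝ, Continuous φ ∧ (∀ x ∈ frontier Rect', φ x = 0) ∧
        ∃ x ∈ frontier Tri, d₁ * φ x + d₂ * φ (K2' x) ≠ 0) := by
  refine ⟨⟨closure_Rect'_eq_union, disjoint_Tri_image_K2'⟩, fun lam hlam => ?_,
    fun _ _ => exists_continuous_folding_ne_zero⟩
  rw [smul_v1_add_smul_v2, smul_v1_add_smul_v2]
  exact ⟨mk_mem_frontier_Tri (Ioo_subset_Icc_self hlam), K2'_mk_div_sqrt_three lam⟩
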